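/- arXiv:1310.2559 — 3 statements merged into one kernel-verified Lean document; each statement's English description precedes it below -/
import Mathlib

section
/- Let S_{d,r} = (1/r!) Σ_{i_1,...,i_r=1}^d Σ_{σ ∈ P_r} ⊗_{ℓ=1}^r e_{i_ℓ} e_{i_{σ(ℓ)}}ᵀ be the d^r × d^r symmetrizer matrix and T_{d,r} = (1/r) Σ_{j=1}^r (I_{d^j} ⊗ K_{d^{r−j−1},d})(I_{d^{j−1}} ⊗ K_{d,d^{r−j}}) (with convention K_{d^{−1},d} = 1). Then S_{d,r+1} = (S_{d,r} ⊗ I_d) T_{d,r+1}. -/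
open Matrix

/-- Kronecker product of real matrices, with `Fin` index arithmetic: the row index
`i < m*p` encodes the pair `(i / p, i % p)` (first factor most significant). -/
def kron {m n p q : ℕ} (A : Matrix (Fin m) (Fin n) ℝ) (B : Matrix (Fin p) (Fin q) ℝ) :
    Matrix (Fin (m * p)) (Fin (n * q)) ℝ := fun i j =>
  A ⟨i.val / p, Nat.div_lt_of_lt_mul (Nat.mul_comm m p ▸ i.isLt)⟩
    ⟨j.val / q, Nat.div_lt_of_lt_mul (Nat.mul_comm n q ▸ j.isLt)⟩ *
  B ⟨i.val % p, Nat.mod_lt _ (by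
      rcases Nat.eq_zero_or_pos p with hp | hp
      · exact absurd i.isLt (by simp [hp])
      · exact hp)⟩
    ⟨j.val % q, Nat.mod_lt _ (by
      rcases Nat.eq_zero_or_pos q with hq | hq
      · exact absurd j.isLt (by simp [hq])
      · exact hq)⟩

/-- The commutation matrix `K_{r,s}` of order `rs × rs`, characterized by
`K_{r,s} vec(M) = vec(Mᵀ)` for every `r × s` matrix `M` (column-major `vec`). -/
def commMat (r s : ℕ) : Matrix (Fin (r * s)) (Fin (r * s)) ℝ := fun a b =>
  if (a : ℕ) = (b : ℕ) / r + (b : ℕ) % r * s then 1 else 0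

/-- Cast a matrix along equalities of its `Fin` dimensions. -/
def mcast {m n m' n' : ℕ} (hm : m = m') (hn : n = n')
    (A : Matrix (Fin m) (Fin n) ℝ) : Matrix (Fin m') (Fin n') ℝ :=
  Matrix.reindex (finCongr hm) (finCongr hn) A

/-- The `ℓ`-th base-`d` digit (most significant first) of an index `a < d^k`. -/
def digit (d k : ℕ) [NeZero d] (a : Fin (d ^ k)) (ℓ : ℕ) : Fin d :=
  ⟨(a : ℕ) / d ^ (k - 1 - ℓ) % d, Nat.mod_lt _ (Nat.pos_of_ne_zero (NeZero.ne d))⟩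

/-- The `k`-fold Kronecker product `M 0 ⊗ M 1 ⊗ ⋯ ⊗ M (k-1)` of `d × d` matrices,
as a `d^k × d^k` matrix. -/
def kronPow {d : ℕ} [NeZero d] (k : ℕ) (M : Fin k → Matrix (Fin d) (Fin d) ℝ) :
    Matrix (Fin (d ^ k)) (Fin (d ^ k)) ℝ := fun a b =>
  ∏ ℓ : Fin k, M ℓ (digit d k a ℓ) (digit d k b ℓ)

/-- The `k`-fold Kronecker product `v 0 ⊗ v 1 ⊗ ⋯ ⊗ v (k-1)` of vectors in `ℝ^d`,
as a vector in `ℝ^{d^k}`. -/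
def vkron {d : ℕ} [NeZero d] (k : ℕ) (v : Fin k → (Fin d → ℝ)) : Fin (d ^ k) → ℝ :=
  fun a => ∏ ℓ : Fin k, v ℓ (digit d k a ℓ)

/-- The symmetrizer matrix
`S_{d,r} = (1/r!) Σ_{i_1,...,i_r} Σ_{σ ∈ P_r} ⊗_{ℓ=1}^r e_{i_ℓ} e_{i_{σ(ℓ)}}ᵀ`. -/
noncomputable def symr (d : ℕ) [NeZero d] (r : ℕ) :
    Matrix (Fin (d ^ r)) (Fin (d ^ r)) ℝ :=
  ((r.factorial : ℝ)⁻¹) •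
    ∑ i : Fin r → Fin d, ∑ σ : Equiv.Perm (Fin r),
      kronPow r fun ℓ => Matrix.single (i ℓ) (i (σ ℓ)) 1

/-- The matrix `T_{d,r} = (1/r) Σ_{j=1}^r (I_{d^j} ⊗ K_{d^{r−j−1},d})(I_{d^{j−1}} ⊗ K_{d,d^{r−j}})`,
with the convention `K_{d^{−1},d} = 1 ∈ ℝ` (so that the `j = r` summand's first factor is
`I_{d^r} ⊗ 1 = I_{d^r}`). -/
noncomputable def Tmat (d r : ℕ) : Matrix (Fin (d ^ r)) (Fin (d ^ r)) ℝ :=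
  ((r : ℝ)⁻¹) •
    ∑ j ∈ (Finset.Icc 1 r).attach,
      (if h : j.1 = r then (1 : Matrix (Fin (d ^ r)) (Fin (d ^ r)) ℝ)
        else mcast
          (by
            have hj := Finset.mem_Icc.mp j.2
            rw [← pow_succ d (r - j.1 - 1), ← pow_add]; congr 1; omega)
          (by
            have hj := Finset.mem_Icc.mp j.2
            rw [← pow_succ d (r - j.1 - 1), ← pow_add]; congr 1; omega)
          (kron (1 : Matrix (Fin (d ^ j.1)) (Fin (d ^ j.1)) ℝ)
            (commMat (d ^ (r - j.1 - 1)) d))) *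
      mcast
        (by
          have hj := Finset.mem_Icc.mp j.2
          rw [← pow_succ' d (r - j.1), ← pow_add]; congr 1; omega)
        (by
          have hj := Finset.mem_Icc.mp j.2
          rw [← pow_succ' d (r - j.1), ← pow_add]; congr 1; omega)
        (kron (1 : Matrix (Fin (d ^ (j.1 - 1))) (Fin (d ^ (j.1 - 1))) ℝ)
          (commMat d (d ^ (r - j.1))))

/-!
Both sides are averages of matrices `P_π` that permute the tensor factors of `(ℝ^d)^{⊗(r+1)}`:
`S_{d,r} = (1/r!) Σ_σ P_σ`, each summand of `T_{d,r+1}` is the product of two block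
transpositions `I ⊗ K`, which together exchange factor `j` with the last factor, and
`P_τ P_ρ = P_{ρ ∘ τ}`. So the right-hand side is `(1/(r+1)!) Σ_{σ, j} P_{(j, r+1) ∘ σ}`,
and every permutation of `r + 1` points factors uniquely as `(j, r+1) ∘ σ` with `σ` fixing `r + 1`.
-/

open Equiv

lemma Nat.mod_pow_div_pow_mod {b k e : ℕ} (n : ℕ) (he : e < k) :
    n % b ^ k / b ^ e % b = n / b ^ e % b := by
  rw [← Nat.add_sub_of_le he.le, pow_add, Nat.mod_mul_right_div_self,
    Nat.mod_mod_of_dvd _ (dvd_pow_self b (by omega))]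

lemma Nat.add_pow_mul_div_pow_mod {b c k : ℕ} (q e : ℕ) (hc : c < b ^ k) :
    (c + b ^ k * q) / b ^ e % b = if e < k then c / b ^ e % b else q / b ^ (e - k) % b := by
  have hk : 0 < b ^ k := by omega
  split_ifs with he
  · rw [← Nat.mod_pow_div_pow_mod _ he, Nat.add_mul_mod_self_left, Nat.mod_eq_of_lt hc]
  · rw [← Nat.add_sub_of_le (not_lt.1 he), pow_add, ← Nat.div_div_eq_div_mul,
      Nat.add_mul_div_left _ _ hk, Nat.div_eq_of_lt hc, zero_add, Nat.add_sub_cancel_left]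

lemma Nat.div_add_mod_mul_lt {x T U : ℕ} (hx : x < T * U) : x / T + x % T * U < T * U := by
  have hT : 0 < T := Nat.pos_of_ne_zero (by rintro rfl; simp at hx)
  have hxT : x / T < U := Nat.div_lt_of_lt_mul hx
  calc x / T + x % T * U < (x % T + 1) * U := by rw [add_one_mul]; omega
    _ ≤ T * U := Nat.mul_le_mul_right _ (Nat.mod_lt x hT)

def digitsEquiv (d k : ℕ) : Fin (d ^ k) ≃ (Fin k → Fin d) :=
  finFunctionFinEquiv.symm.trans (arrowCongr Fin.revPerm (Equiv.refl _))

section Digits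

variable {d : ℕ} [NeZero d] {k : ℕ}

lemma digitsEquiv_apply (a : Fin (d ^ k)) (ℓ : Fin k) : digitsEquiv d k a ℓ = digit d k a ℓ := by
  ext
  simp only [digitsEquiv, trans_apply, arrowCongr_apply, coe_refl, Fin.revPerm_symm,
    Function.comp_apply, Fin.revPerm_apply, id_eq, finFunctionFinEquiv_symm_apply_val,
    Fin.val_rev, digit]
  rw [Nat.sub_sub, add_comm 1]

lemma eq_of_digit_eq {a b : Fin (d ^ k)} (h : ∀ ℓ : Fin k, digit d k a ℓ = digit d k b ℓ) :
    a = b :=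
  (digitsEquiv d k).injective (funext fun ℓ => by simpa only [digitsEquiv_apply] using h ℓ)

lemma val_eq_iff_digit_eq (a : Fin (d ^ k)) {n : ℕ} (hn : n < d ^ k) :
    (a : ℕ) = n ↔ ∀ ℓ : Fin k, (digit d k a ℓ : ℕ) = n / d ^ (k - 1 - ℓ) % d := by
  refine ⟨fun h ℓ => by rw [← h]; rfl, fun h => ?_⟩
  rw [eq_of_digit_eq (b := ⟨n, hn⟩) fun ℓ => Fin.ext (h ℓ)]

lemma digit_castSucc (a : Fin (d ^ (k + 1))) (h : (a : ℕ) / d < d ^ k) (ℓ : Fin k) :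
    digit d k ⟨a / d, h⟩ ℓ = digit d (k + 1) a ℓ.castSucc := by
  ext
  simp only [digit, Fin.val_castSucc, Nat.div_div_eq_div_mul, ← pow_succ']
  congr 3
  omega

lemma digit_last (a : Fin (d ^ (k + 1))) :
    digit d (k + 1) a (Fin.last k) = ⟨a % d, Nat.mod_lt _ (NeZero.pos d)⟩ := by
  simp [digit]

end Digits

/-- `tensorPerm d τ` maps `e_{j_1} ⊗ ⋯ ⊗ e_{j_R}` to `e_{j_{τ 1}} ⊗ ⋯ ⊗ e_{j_{τ R}}`. -/
def tensorPerm (d : ℕ) [NeZero d] {R : ℕ} (τ : Perm (Fin R)) :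
    Matrix (Fin (d ^ R)) (Fin (d ^ R)) ℝ :=
  of fun a b => if ∀ ℓ : Fin R, digit d R a ℓ = digit d R b (τ ℓ) then 1 else 0

section TensorPerm

variable {d : ℕ} [NeZero d]

lemma tensorPerm_mul {R : ℕ} (τ ρ : Perm (Fin R)) :
    tensorPerm d τ * tensorPerm d ρ = tensorPerm d (ρ * τ) := by
  ext a b
  rw [mul_apply, ← (digitsEquiv d R).symm.sum_comp,
    Fintype.sum_eq_single (digitsEquiv d R b ∘ ρ)]
  · simp [tensorPerm, ← digitsEquiv_apply]
  · intro f hf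
    simp only [tensorPerm, of_apply, ← digitsEquiv_apply, apply_symm_apply]
    exact mul_eq_zero_of_right _ (if_neg fun h => hf (funext h))

lemma sum_kronPow_single (k : ℕ) (σ : Perm (Fin k)) :
    ∑ i : Fin k → Fin d, kronPow k (fun ℓ => single (i ℓ) (i (σ ℓ)) (1 : ℝ)) =
      tensorPerm d σ⁻¹ := by
  ext a b
  simp only [Matrix.sum_apply, kronPow, single_apply, Finset.prod_boole, tensorPerm, of_apply]
  rw [Fintype.sum_eq_single (digitsEquiv d k a)]
  · simp only [Finset.mem_univ, digitsEquiv_apply, true_and, forall_const, Perm.coe_inv]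
    exact if_congr (σ.forall_congr fun {ℓ} => by simp) rfl rfl
  · intro i hi
    exact if_neg fun h => hi (funext fun ℓ => by
      rw [(h ℓ (Finset.mem_univ _)).1, digitsEquiv_apply])

lemma symr_eq_sum_tensorPerm (k : ℕ) :
    symr d k = (k.factorial : ℝ)⁻¹ • ∑ σ : Perm (Fin k), tensorPerm d σ := by
  rw [symr, Finset.sum_comm]
  simp only [sum_kronPow_single]
  congr 1
  exact Fintype.sum_equiv (Equiv.inv _) _ _ fun σ => rfl

end TensorPerm

section Permutations

variable {r : ℕ}

def extLast (σ : Perm (Fin r)) : Perm (Fin (r + 1)) :=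
  finSuccEquivLast.symm.permCongr σ.optionCongr

@[simp] lemma extLast_castSucc (σ : Perm (Fin r)) (ℓ : Fin r) :
    extLast σ ℓ.castSucc = (σ ℓ).castSucc := by
  simp [extLast, finSuccEquivLast_castSucc, finSuccEquivLast_symm_some]

@[simp] lemma extLast_last (σ : Perm (Fin r)) : extLast σ (Fin.last r) = Fin.last r := by
  simp [extLast, finSuccEquivLast_last]

lemma sum_perm_fin_succ {M : Type*} [AddCommMonoid M] (f : Perm (Fin (r + 1)) → M) :
    ∑ π, f π = ∑ σ : Perm (Fin r), ∑ m : Fin (r + 1), f (swap m (Fin.last r) * extLast σ) := by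
  rw [← Fintype.sum_prod_type']
  refine (Fintype.sum_equiv ((prodComm _ _).trans ((finSuccEquivLast.prodCongr (Equiv.refl _)).trans
    (Perm.decomposeOption.symm.trans finSuccEquivLast.symm.permCongr))) _ _ fun p => ?_).symm
  have hswap : finSuccEquivLast.symm.permCongr (swap none (finSuccEquivLast p.2)) =
      swap p.2 (Fin.last r) := by
    rw [permCongr_def, symm_trans_swap_trans]
    simp [Equiv.swap_comm]
  simp [extLast, hswap]

def blockSwap {R s t u : ℕ} (h : s + t + u = R) : Perm (Fin R) where
  toFun ℓ := ⟨if (ℓ : ℕ) < s then ℓ else if (ℓ : ℕ) < s + t then ℓ + u else ℓ - t,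
    by split_ifs <;> omega⟩
  invFun ℓ := ⟨if (ℓ : ℕ) < s then ℓ else if (ℓ : ℕ) < s + u then ℓ + t else ℓ - u,
    by split_ifs <;> omega⟩
  left_inv ℓ := by ext; dsimp only; split_ifs <;> omega
  right_inv ℓ := by ext; dsimp only; split_ifs <;> omega

lemma val_blockSwap {R s t u : ℕ} (h : s + t + u = R) (ℓ : Fin R) :
    (blockSwap h ℓ : ℕ) =
      if (ℓ : ℕ) < s then (ℓ : ℕ) else if (ℓ : ℕ) < s + t then ℓ + u else ℓ - t :=
  rfl

end Permutations

section Kronecker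

variable {d : ℕ} [NeZero d]

lemma mcast_kron_tensorPerm_one {r : ℕ} (σ : Perm (Fin r)) (hm hn : d ^ r * d = d ^ (r + 1)) :
    mcast hm hn (kron (tensorPerm d σ) (1 : Matrix (Fin d) (Fin d) ℝ)) =
      tensorPerm d (extLast σ) := by
  ext a b
  simp only [mcast, reindex_apply, submatrix_apply, finCongr_symm, finCongr_apply, Fin.val_cast,
    kron, tensorPerm, of_apply, one_apply, ite_mul, one_mul, zero_mul, ← ite_and]
  refine if_congr ?_ rfl rfl
  simp only [Fin.forall_fin_succ' (n := r), digit_castSucc, extLast_castSucc, extLast_last,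
    digit_last]

lemma mcast_kron_symr_one (r : ℕ) (hm hn : d ^ r * d = d ^ (r + 1)) :
    mcast hm hn (kron (symr d r) (1 : Matrix (Fin d) (Fin d) ℝ)) =
      (r.factorial : ℝ)⁻¹ • ∑ σ : Perm (Fin r), tensorPerm d (extLast σ) := by
  simp_rw [symr_eq_sum_tensorPerm, ← mcast_kron_tensorPerm_one _ hm hn]
  ext a b
  simp [mcast, kron, Matrix.sum_apply, Finset.sum_mul, mul_assoc]

/-- The number on the left is the row index that `I_{d^s} ⊗ K_{d^t,d^u}` pairs with the column
index `b`. -/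
lemma kron_one_commMat_index_digit (t u b e : ℕ) :
    (b % (d ^ t * d ^ u) / d ^ t + b % (d ^ t * d ^ u) % d ^ t * d ^ u +
        d ^ t * d ^ u * (b / (d ^ t * d ^ u))) / d ^ e % d =
      b / d ^ (if e < u then e + t else if e < t + u then e - u else e) % d := by
  have hd := NeZero.pos d
  rw [← pow_add]
  set x := b % d ^ (t + u)
  have hx : x < d ^ t * d ^ u := by rw [← pow_add]; exact Nat.mod_lt _ (by positivity)
  have hxt : x / d ^ t < d ^ u := Nat.div_lt_of_lt_mul hx
  have hc := Nat.div_add_mod_mul_lt hx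
  rw [← pow_add] at hc
  rw [Nat.add_pow_mul_div_pow_mod _ _ hc, mul_comm _ (d ^ u), Nat.add_pow_mul_div_pow_mod _ _ hxt]
  conv_rhs => rw [← Nat.mod_add_div b (d ^ (t + u)),
    Nat.add_pow_mul_div_pow_mod _ _ (Nat.mod_lt _ (by positivity))]
  split_ifs with h1 h2 h3 <;> try omega
  · rw [Nat.div_div_eq_div_mul, ← pow_add, add_comm t]
  · exact Nat.mod_pow_div_pow_mod _ (by omega)

lemma mcast_kron_one_commMat {R s t u T U : ℕ} (h : s + t + u = R) (hT : T = d ^ t)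
    (hU : U = d ^ u) (hm hn : d ^ s * (T * U) = d ^ R) :
    mcast hm hn (kron (1 : Matrix (Fin (d ^ s)) (Fin (d ^ s)) ℝ) (commMat T U)) =
      tensorPerm d (blockSwap h) := by
  subst hT hU h
  ext a b
  simp only [mcast, reindex_apply, submatrix_apply, finCongr_symm, finCongr_apply, Fin.val_cast,
    kron, commMat, tensorPerm, of_apply, one_apply, Fin.ext_iff, ite_mul, one_mul, zero_mul,
    ← ite_and]
  refine if_congr ?_ rfl rfl
  have hd := NeZero.pos d
  have hc := Nat.div_add_mod_mul_lt (Nat.mod_lt b (show 0 < d ^ t * d ^ u by positivity))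
  have hq : b / (d ^ t * d ^ u) < d ^ s := Nat.div_lt_of_lt_mul (b.isLt.trans_eq (by ring))
  have hn : b % (d ^ t * d ^ u) / d ^ t + b % (d ^ t * d ^ u) % d ^ t * d ^ u +
      d ^ t * d ^ u * (b / (d ^ t * d ^ u)) < d ^ (s + t + u) :=
    calc _ < d ^ t * d ^ u * (b / (d ^ t * d ^ u) + 1) := by rw [mul_add_one]; omega
      _ ≤ d ^ t * d ^ u * d ^ s := Nat.mul_le_mul_left _ hq
      _ = d ^ (s + t + u) := by ring
  rw [Nat.div_mod_unique (by positivity), and_iff_left hc, eq_comm, val_eq_iff_digit_eq a hn]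
  refine forall_congr' fun ℓ => ?_
  rw [kron_one_commMat_index_digit]
  simp only [digit, val_blockSwap]
  split_ifs <;> congr! 4 <;> omega

lemma Tmat_succ (r : ℕ) :
    Tmat d (r + 1) =
      ((r + 1 : ℕ) : ℝ)⁻¹ • ∑ m : Fin (r + 1), tensorPerm d (swap m (Fin.last r)) := by
  rw [Tmat]
  congr 1
  refine Finset.sum_nbij' (fun j => ⟨j.1 - 1, by have := Finset.mem_Icc.1 j.2; omega⟩)
    (fun m => ⟨m + 1, Finset.mem_Icc.2 (by omega)⟩) (by simp) (by simp)
    (fun j _ => Subtype.ext (by have := Finset.mem_Icc.1 j.2; simp only; omega)) (by simp)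
    fun ⟨j, hj⟩ _ => ?_
  obtain ⟨hj1, hjr⟩ := Finset.mem_Icc.1 hj
  dsimp only
  rw [mcast_kron_one_commMat (t := 1) (u := r + 1 - j) (by simp only; omega) (pow_one d).symm rfl]
  split_ifs with hj
  · rw [one_mul]
    congr 1
    ext ℓ
    rw [val_blockSwap, swap_apply_def]
    split_ifs <;> simp only [Fin.ext_iff, Fin.val_last] at * <;> omega
  · rw [mcast_kron_one_commMat (t := r + 1 - j - 1) (u := 1) (by simp only; omega) rfl
      (pow_one d).symm, tensorPerm_mul]
    congr 1
    ext ℓ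
    rw [Perm.mul_apply, val_blockSwap, val_blockSwap, swap_apply_def]
    split_ifs <;> simp only [Fin.ext_iff, Fin.val_last] at * <;> omega

end Kronecker

/-- Theorem 1: `S_{d,r+1} = (S_{d,r} ⊗ I_d) T_{d,r+1}`. -/
theorem symmetrizer_recursion (d : ℕ) [NeZero d] (r : ℕ) :
    symr d (r + 1) =
      (mcast (pow_succ d r).symm (pow_succ d r).symm
          (kron (symr d r) (1 : Matrix (Fin d) (Fin d) ℝ)) :
        Matrix (Fin (d ^ (r + 1))) (Fin (d ^ (r + 1))) ℝ) *
      Tmat d (r + 1) := by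
  rw [symr_eq_sum_tensorPerm, mcast_kron_symr_one, Tmat_succ, smul_mul_smul_comm,
    Finset.sum_mul_sum, sum_perm_fin_succ]
  simp_rw [tensorPerm_mul]
  rw [Nat.factorial_succ, Nat.cast_mul, mul_inv, mul_comm]
end

section
/- With T_{d,r} = (1/r) Σ_{j=1}^r (I_{d^j} ⊗ K_{d^{r−j−1},d})(I_{d^{j−1}} ⊗ K_{d,d^{r−j}}), for any r ≥ 1: (r+1) T_{d,r+1} = (I_{d^{r−1}} ⊗ K_{d,d})(r T_{d,r} ⊗ I_d)(I_{d^{r−1}} ⊗ K_{d,d}) + I_{d^{r−1}} ⊗ K_{d,d}. -/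
open Matrix

/-!
Index the rows of a `d^n × d^n` matrix by words of `n` base-`d` digits. Every factor in sight
is then the permutation matrix of a map on indices: `I_m ⊗ K_{u,v}` exchanges the two trailing
mixed-radix digits of radices `u` and `v`, so the `j`-th summand of `r T_{d,r}` transposes the
`j`-th and the last digit (and is the identity for `j = r`), while `I_{d^{r-1}} ⊗ K_{d,d}`
transposes the last two digits. Conjugating the transposition `(j r) ⊗ id` by `(r r+1)` gives
`(j r+1)`, and conjugating the identity term gives the identity, i.e. the `j = r + 1` term of
`(r+1) T_{d,r+1}`; the remaining term `(r r+1)` is the summand `I_{d^{r-1}} ⊗ K_{d,d}`.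
-/

open Set

lemma Nat.exists_mul_add_eq {b : ℕ} (hb : 0 < b) (y : ℕ) : ∃ q r, r < b ∧ q * b + r = y :=
  ⟨y / b, y % b, Nat.mod_lt y hb, Nat.div_add_mod' y b⟩

lemma Nat.mul_add_lt_mul {p u q v : ℕ} (hp : p < u) (hq : q < v) : p * v + q < u * v := by
  nlinarith

lemma Nat.div_eq_and_mod_eq_iff {a k q r : ℕ} (hr : r < k) :
    a / k = q ∧ a % k = r ↔ a = q * k + r := by
  rw [Nat.div_mod_unique (by omega)]
  constructor
  · rintro ⟨rfl, -⟩; ring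
  · rintro rfl; exact ⟨by ring, hr⟩

/-- The index map of `I_m ⊗ K_{u,v}`, for every `m`. -/
def commIdx (u v z : ℕ) : ℕ := (z / u / v * u + z % u) * v + z / u % v

lemma commIdx_apply {u v X q p : ℕ} (hq : q < v) (hp : p < u) :
    commIdx u v ((X * v + q) * u + p) = (X * u + p) * v + q := by
  have hXq : ((X * v + q) * u + p) / u = X * v + q := ((Nat.div_eq_and_mod_eq_iff hp).2 rfl).1
  have hX : (X * v + q) / v = X := ((Nat.div_eq_and_mod_eq_iff hq).2 rfl).1
  rw [commIdx, hXq, hX, Nat.mul_add_mod_of_lt hp, Nat.mul_add_mod_of_lt hq]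

@[simp] lemma commIdx_one_left (v : ℕ) : commIdx 1 v = id := by
  funext z; simp [commIdx, Nat.mod_one, Nat.div_add_mod']

@[simp] lemma commIdx_one_right (u : ℕ) : commIdx u 1 = id := by
  funext z; simp [commIdx, Nat.mod_one, Nat.div_add_mod']

lemma commIdx_mapsTo {u v N : ℕ} (hu : 0 < u) (hv : 0 < v) (hN : u * v ∣ N) :
    MapsTo (commIdx u v) (Iio N) (Iio N) := by
  intro y hy
  obtain ⟨K, rfl⟩ := hN
  obtain ⟨y', p, hp, rfl⟩ := Nat.exists_mul_add_eq hu y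
  obtain ⟨X, q, hq, rfl⟩ := Nat.exists_mul_add_eq hv y'
  simp only [mem_Iio] at hy ⊢
  rw [commIdx_apply hq hp]
  have hX : X < K := by
    by_contra! hKX
    have := Nat.mul_le_mul_left (u * v) hKX
    nlinarith
  calc (X * u + p) * v + q = X * (u * v) + (p * v + q) := by ring
    _ < X * (u * v) + u * v := by have := Nat.mul_add_lt_mul hp hq; omega
    _ = (X + 1) * (u * v) := by ring
    _ ≤ u * v * K := by rw [mul_comm]; exact Nat.mul_le_mul_left _ hX

lemma commIdx_involutive {d : ℕ} (hd : 0 < d) : Function.Involutive (commIdx d d) := by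
  intro y
  obtain ⟨y', p, hp, rfl⟩ := Nat.exists_mul_add_eq hd y
  obtain ⟨X, q, hq, rfl⟩ := Nat.exists_mul_add_eq hd y'
  rw [commIdx_apply hq hp, commIdx_apply hp hq]

/-- The index map of `F ⊗ I_d`, when `f` is that of `F`. -/
def liftIdx (d : ℕ) (f : ℕ → ℕ) (y : ℕ) : ℕ := f (y / d) * d + y % d

lemma liftIdx_apply {d x e : ℕ} (f : ℕ → ℕ) (he : e < d) :
    liftIdx d f (x * d + e) = f x * d + e := by
  obtain ⟨hx, hmod⟩ := (Nat.div_eq_and_mod_eq_iff he).2 rfl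
  rw [liftIdx, hx, hmod]

@[simp] lemma liftIdx_id (d : ℕ) : liftIdx d id = id := by
  funext y; exact Nat.div_add_mod' y d

lemma liftIdx_mapsTo {d M : ℕ} (hd : 0 < d) {f : ℕ → ℕ} (hf : MapsTo f (Iio M) (Iio M)) :
    MapsTo (liftIdx d f) (Iio (M * d)) (Iio (M * d)) := by
  intro y hy
  obtain ⟨x, e, he, rfl⟩ := Nat.exists_mul_add_eq hd y
  simp only [mem_Iio] at hy ⊢
  have hx : x < M := by nlinarith
  have hfx : f x < M := hf hx
  rw [liftIdx_apply f he]
  nlinarith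

def swapIdx (d M : ℕ) : ℕ → ℕ := commIdx M d ∘ commIdx d (M * d)

lemma swapIdx_apply {d M A c B e : ℕ} (hc : c < d) (hB : B < M) (he : e < d) :
    swapIdx d M (((A * d + c) * M + B) * d + e) = ((A * d + e) * M + B) * d + c := by
  have hcB : c * M + B < M * d := mul_comm d M ▸ Nat.mul_add_lt_mul hc hB
  rw [swapIdx, Function.comp_apply,
    show ((A * d + c) * M + B) * d + e = (A * (M * d) + (c * M + B)) * d + e by ring,
    commIdx_apply hcB he,
    show (A * d + e) * (M * d) + (c * M + B) = ((A * d + e) * d + c) * M + B by ring,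
    commIdx_apply hc hB]

lemma commIdx_liftIdx_swapIdx {d M : ℕ} (hd : 0 < d) (hM : 0 < M) (y : ℕ) :
    commIdx d d (liftIdx d (swapIdx d M) (commIdx d d y)) = swapIdx d (M * d) y := by
  obtain ⟨y₁, e, he, rfl⟩ := Nat.exists_mul_add_eq hd y
  obtain ⟨y₂, f, hf, rfl⟩ := Nat.exists_mul_add_eq hd y₁
  obtain ⟨y₃, B, hB, rfl⟩ := Nat.exists_mul_add_eq hM y₂
  obtain ⟨A, c, hc, rfl⟩ := Nat.exists_mul_add_eq hd y₃
  have hBf : B * d + f < M * d := Nat.mul_add_lt_mul hB hf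
  rw [commIdx_apply hf he, liftIdx_apply _ hf, swapIdx_apply hc hB he, commIdx_apply hc hf,
    show (((A * d + c) * M + B) * d + f) * d + e = ((A * d + c) * (M * d) + (B * d + f)) * d + e
      by ring,
    swapIdx_apply hc hBf he]
  ring

/-- The index map of the `j`-th summand of `n T_{d,n}`. -/
def transpIdx (d n j : ℕ) : ℕ → ℕ := commIdx (d ^ (n - j - 1)) d ∘ commIdx d (d ^ (n - j))

@[simp] lemma transpIdx_self (d n : ℕ) : transpIdx d n n = id := by
  simp [transpIdx]

lemma transpIdx_eq_swapIdx {d n j : ℕ} (hj : j < n) :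
    transpIdx d n j = swapIdx d (d ^ (n - j - 1)) := by
  rw [transpIdx, swapIdx, ← pow_succ, Nat.sub_add_cancel (by omega)]

lemma transpIdx_mapsTo {d n j : ℕ} (hd : 0 < d) (hj : 1 ≤ j) (hjn : j ≤ n) :
    MapsTo (transpIdx d n j) (Iio (d ^ n)) (Iio (d ^ n)) :=
  (commIdx_mapsTo (pow_pos hd _) hd (by rw [← pow_succ]; exact pow_dvd_pow d (by omega))).comp
    (commIdx_mapsTo hd (pow_pos hd _) (by rw [← pow_succ']; exact pow_dvd_pow d (by omega)))

lemma commIdx_liftIdx_transpIdx {d n j : ℕ} (hd : 0 < d) (hj : j < n) :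
    commIdx d d ∘ liftIdx d (transpIdx d n j) ∘ commIdx d d = transpIdx d (n + 1) j := by
  funext y
  rw [transpIdx_eq_swapIdx hj, transpIdx_eq_swapIdx (by omega),
    show n + 1 - j - 1 = n - j - 1 + 1 by omega, pow_succ]
  exact commIdx_liftIdx_swapIdx hd (pow_pos hd _) y

lemma commIdx_liftIdx_transpIdx_self {d n : ℕ} (hd : 0 < d) :
    commIdx d d ∘ liftIdx d (transpIdx d n n) ∘ commIdx d d = id := by
  rw [transpIdx_self, liftIdx_id, Function.id_comp]
  exact (commIdx_involutive hd).comp_self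

lemma transpIdx_succ_self (d n : ℕ) : transpIdx d (n + 1) n = commIdx d d := by
  simp [transpIdx]

def mapMatrix (N : ℕ) (f : ℕ → ℕ) : Matrix (Fin N) (Fin N) ℝ := fun a b =>
  if (a : ℕ) = f b then 1 else 0

lemma mapMatrix_id (N : ℕ) : mapMatrix N id = 1 := by
  ext a b
  simp [mapMatrix, Matrix.one_apply, Fin.ext_iff]

lemma mapMatrix_mul {N : ℕ} (f : ℕ → ℕ) {g : ℕ → ℕ} (hg : MapsTo g (Iio N) (Iio N)) :
    mapMatrix N f * mapMatrix N g = mapMatrix N (f ∘ g) := by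
  ext a b
  rw [Matrix.mul_apply, Finset.sum_eq_single ⟨g b, hg b.2⟩]
  · simp [mapMatrix]
  · intro c _ hc
    simp [mapMatrix, show (c : ℕ) ≠ g b from fun h => hc (Fin.ext h)]
  · simp

lemma mcast_kron_one_commMat_s10 {m u v N : ℕ} (hu : 0 < u) (hv : 0 < v)
    (h h' : m * (u * v) = N) :
    mcast h h' (kron (1 : Matrix (Fin m) (Fin m) ℝ) (commMat u v)) =
      mapMatrix N (commIdx u v) := by
  ext a b
  obtain ⟨y, p, hp, hb⟩ := Nat.exists_mul_add_eq hu b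
  obtain ⟨X, q, hq, rfl⟩ := Nat.exists_mul_add_eq hv y
  have hqp : q * u + p < u * v := mul_comm v u ▸ Nat.mul_add_lt_mul hq hp
  have hpq : p * v + q < u * v := Nat.mul_add_lt_mul hp hq
  obtain ⟨hbdiv, hbmod⟩ : (b : ℕ) / (u * v) = X ∧ (b : ℕ) % (u * v) = q * u + p :=
    (Nat.div_eq_and_mod_eq_iff hqp).2 (by rw [← hb]; ring)
  obtain ⟨hq', hp'⟩ : (q * u + p) / u = q ∧ (q * u + p) % u = p :=
    (Nat.div_eq_and_mod_eq_iff hp).2 rfl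
  have key : (a : ℕ) / (u * v) = X ∧ (a : ℕ) % (u * v) = q + p * v ↔
      (a : ℕ) = commIdx u v b := by
    rw [← hb, commIdx_apply hq hp, add_comm q, Nat.div_eq_and_mod_eq_iff hpq]
    constructor <;> intro h <;> linarith
  simp only [mcast, reindex_apply, submatrix_apply, finCongr_symm, finCongr_apply, kron, commMat,
    mapMatrix, Matrix.one_apply, Fin.ext_iff, Fin.val_cast, hbdiv, hbmod, hq', hp',
    ite_zero_mul_ite_zero, mul_one, key]

lemma mcast_kron_mapMatrix_one {M d N : ℕ} (hd : 0 < d) (h h' : M * d = N) (f : ℕ → ℕ) :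
    mcast h h' (kron (mapMatrix M f) (1 : Matrix (Fin d) (Fin d) ℝ)) =
      mapMatrix N (liftIdx d f) := by
  ext a b
  have key : (a : ℕ) / d = f ((b : ℕ) / d) ∧ (a : ℕ) % d = (b : ℕ) % d ↔
      (a : ℕ) = liftIdx d f b :=
    Nat.div_eq_and_mod_eq_iff (Nat.mod_lt _ hd)
  simp only [mcast, reindex_apply, submatrix_apply, finCongr_symm, finCongr_apply, kron,
    mapMatrix, Matrix.one_apply, Fin.ext_iff, Fin.val_cast, ite_zero_mul_ite_zero, mul_one, key]

lemma sum_kron {m n p q : ℕ} {ι : Type*} (s : Finset ι) (F : ι → Matrix (Fin m) (Fin n) ℝ)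
    (B : Matrix (Fin p) (Fin q) ℝ) : kron (∑ i ∈ s, F i) B = ∑ i ∈ s, kron (F i) B := by
  ext a b
  simp [kron, Matrix.sum_apply, Finset.sum_mul]

lemma mcast_sum {m n m' n' : ℕ} (hm : m = m') (hn : n = n') {ι : Type*} (s : Finset ι)
    (F : ι → Matrix (Fin m) (Fin n) ℝ) :
    mcast hm hn (∑ i ∈ s, F i) = ∑ i ∈ s, mcast hm hn (F i) := by
  ext a b
  simp [mcast, Matrix.sum_apply]

lemma natCast_smul_Tmat {d n : ℕ} (hd : 0 < d) :
    (n : ℝ) • Tmat d n = ∑ j ∈ Finset.Icc 1 n, mapMatrix (d ^ n) (transpIdx d n j) := by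
  rcases Nat.eq_zero_or_pos n with rfl | hn
  · rw [Nat.cast_zero, zero_smul, Finset.Icc_eq_empty (by omega), Finset.sum_empty]
  rw [Tmat, smul_smul, mul_inv_cancel₀ (by positivity), one_smul,
    ← Finset.sum_attach (Finset.Icc 1 n)]
  refine Finset.sum_congr rfl fun j _ => ?_
  have hj := Finset.mem_Icc.mp j.2
  rw [mcast_kron_one_commMat_s10 hd (pow_pos hd _), transpIdx, ← mapMatrix_mul _
    (commIdx_mapsTo hd (pow_pos hd _) (by rw [← pow_succ']; exact pow_dvd_pow d (by omega)))]
  congr 1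
  split_ifs with h
  · rw [h, Nat.sub_self, Nat.zero_sub, pow_zero, commIdx_one_left, mapMatrix_id]
  · exact mcast_kron_one_commMat_s10 (pow_pos hd _) hd _ _

lemma sum_transpIdx_succ {d n : ℕ} (hd : 0 < d) (hn : 1 ≤ n) :
    ∑ j ∈ Finset.Icc 1 (n + 1), mapMatrix (d ^ (n + 1)) (transpIdx d (n + 1) j) =
      ∑ j ∈ Finset.Icc 1 n,
        mapMatrix (d ^ (n + 1)) (commIdx d d ∘ liftIdx d (transpIdx d n j) ∘ commIdx d d) +
      mapMatrix (d ^ (n + 1)) (commIdx d d) := by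
  obtain ⟨m, rfl⟩ : ∃ m, n = m + 1 := ⟨n - 1, by omega⟩
  have hconj : ∑ j ∈ Finset.Icc 1 m, mapMatrix (d ^ (m + 1 + 1))
      (commIdx d d ∘ liftIdx d (transpIdx d (m + 1) j) ∘ commIdx d d) =
      ∑ j ∈ Finset.Icc 1 m, mapMatrix (d ^ (m + 1 + 1)) (transpIdx d (m + 1 + 1) j) :=
    Finset.sum_congr rfl fun j hj => by
      rw [commIdx_liftIdx_transpIdx hd (by simp at hj; omega)]
  rw [Finset.sum_Icc_succ_top (by omega), Finset.sum_Icc_succ_top (by omega),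
    Finset.sum_Icc_succ_top (by omega), hconj, commIdx_liftIdx_transpIdx_self hd, transpIdx_self,
    transpIdx_succ_self, mapMatrix_id]
  abel

/-- Theorem 2: for `r ≥ 1`,
`(r+1) T_{d,r+1} = (I_{d^{r−1}} ⊗ K_{d,d})(r T_{d,r} ⊗ I_d)(I_{d^{r−1}} ⊗ K_{d,d})
  + I_{d^{r−1}} ⊗ K_{d,d}`. -/
theorem Tmat_recursion (d r : ℕ) (hr : 1 ≤ r) :
    ((r : ℝ) + 1) • Tmat d (r + 1) =
      (mcast (by rw [show d * d = d ^ 2 from (sq d).symm, ← pow_add]; congr 1; omega) (by rw [show d * d = d ^ 2 from (sq d).symm, ← pow_add]; congr 1; omega)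
          (kron (1 : Matrix (Fin (d ^ (r - 1))) (Fin (d ^ (r - 1))) ℝ) (commMat d d)) :
        Matrix (Fin (d ^ (r + 1))) (Fin (d ^ (r + 1))) ℝ) *
      (mcast (pow_succ d r).symm (pow_succ d r).symm
          (kron ((r : ℝ) • Tmat d r) (1 : Matrix (Fin d) (Fin d) ℝ)) :
        Matrix (Fin (d ^ (r + 1))) (Fin (d ^ (r + 1))) ℝ) *
      (mcast (by rw [show d * d = d ^ 2 from (sq d).symm, ← pow_add]; congr 1; omega) (by rw [show d * d = d ^ 2 from (sq d).symm, ← pow_add]; congr 1; omega)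
          (kron (1 : Matrix (Fin (d ^ (r - 1))) (Fin (d ^ (r - 1))) ℝ) (commMat d d)) :
        Matrix (Fin (d ^ (r + 1))) (Fin (d ^ (r + 1))) ℝ) +
      (mcast (by rw [show d * d = d ^ 2 from (sq d).symm, ← pow_add]; congr 1; omega) (by rw [show d * d = d ^ 2 from (sq d).symm, ← pow_add]; congr 1; omega)
          (kron (1 : Matrix (Fin (d ^ (r - 1))) (Fin (d ^ (r - 1))) ℝ) (commMat d d)) :
        Matrix (Fin (d ^ (r + 1))) (Fin (d ^ (r + 1))) ℝ) := by
  rcases Nat.eq_zero_or_pos d with rfl | hd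
  · ext a
    exact absurd a.isLt (by simp)
  have hσ : MapsTo (commIdx d d) (Iio (d ^ (r + 1))) (Iio (d ^ (r + 1))) :=
    commIdx_mapsTo hd hd ⟨d ^ (r - 1), by rw [← sq, ← pow_add]; congr 1; omega⟩
  have hlift (j : ℕ) (hj : j ∈ Finset.Icc 1 r) :
      MapsTo (liftIdx d (transpIdx d r j)) (Iio (d ^ (r + 1))) (Iio (d ^ (r + 1))) := by
    rw [pow_succ]
    exact liftIdx_mapsTo hd (transpIdx_mapsTo hd (Finset.mem_Icc.1 hj).1 (Finset.mem_Icc.1 hj).2)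
  rw [← Nat.cast_succ, natCast_smul_Tmat hd, natCast_smul_Tmat hd,
    mcast_kron_one_commMat_s10 hd hd, sum_kron, mcast_sum, sum_transpIdx_succ hd hr]
  simp only [mcast_kron_mapMatrix_one hd]
  rw [Finset.mul_sum, Finset.sum_mul]
  congr 1
  exact Finset.sum_congr rfl fun j hj => by
    rw [mapMatrix_mul _ (hlift j hj), mapMatrix_mul _ hσ, Function.comp_assoc]
end

section
/- If F_1 = AΣ and F_2 = BΣ commute (F_1 F_2 = F_2 F_1), then the joint cumulant simplifies to κ_{r,s}(A,B) = 2^{r+s−1}(r+s−1)! { tr(F_1^r F_2^s) + (r+s) tr(F_1^r F_2^s Σ^{−1} μ μᵀ) }. -/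
/-!
If `F₁ = AΣ` and `F₂ = BΣ` commute, every word `F_{i₁} ⋯ F_{i_{r+s}}` with `i ∈ MP_{r,s}` equals
`F₁^r F₂^s`, so the sum defining `κ_{r,s}` has `C(r+s, r)` equal terms, and
`C(r+s, r) r! s! = (r+s)! = (r+s)(r+s−1)!`. Distributing the trace over
`I_d/(r+s) + Σ⁻¹μμᵀ` then gives the closed form.
-/

open Matrix

/-- `MP r s`: sequences in `{1,2}^{r+s}` (encoded as functions to `Fin 2`, `0 ↔ 1`,
`1 ↔ 2`) with exactly `r` ones and `s` twos. -/
def MPset (r s : ℕ) : Finset (Fin (r + s) → Fin 2) :=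
  Finset.univ.filter fun i => (Finset.univ.filter fun ℓ => i ℓ = 0).card = r

/-- The joint `(r,s)`-cumulant of `XᵀAX` and `XᵀBX` for `X ~ N_d(μ,Σ)`:
`κ_{r,s}(A,B) = 2^{r+s−1} r! s! Σ_{i ∈ MP_{r,s}} tr[F_{i₁} ⋯ F_{i_{r+s}}
  {I_d/(r+s) + Σ^{−1}μμᵀ}]`, with `F₁ = AΣ`, `F₂ = BΣ`. -/
noncomputable def jointCumulant {d : ℕ} (A B S : Matrix (Fin d) (Fin d) ℝ)
    (μ : Fin d → ℝ) (r s : ℕ) : ℝ :=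
  2 ^ (r + s - 1) * r.factorial * s.factorial *
    ∑ i ∈ MPset r s,
      ((((List.finRange (r + s)).map (fun ℓ => ![A * S, B * S] (i ℓ))).prod) *
        (((r + s : ℕ) : ℝ)⁻¹ • (1 : Matrix (Fin d) (Fin d) ℝ) +
          S⁻¹ * vecMulVec μ μ)).trace

open Finset

theorem Fin.ne_zero_iff_eq_one {a : Fin 2} : a ≠ 0 ↔ a = 1 := by
  omega

theorem List.prod_map_fin_two {M : Type*} [Monoid M] {f : Fin 2 → M} (h : Commute (f 0) (f 1)) :
    ∀ l : List (Fin 2), (l.map f).prod = f 0 ^ l.count 0 * f 1 ^ l.count 1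
  | [] => by simp
  | a :: l => by
    rw [List.map_cons, List.prod_cons, List.prod_map_fin_two h l]
    fin_cases a
    · simp [pow_succ', mul_assoc]
    · simp only [Fin.mk_one, Fin.isValue, ne_eq, one_ne_zero, not_false_eq_true,
        List.count_cons_of_ne, List.count_cons_self]
      rw [← mul_assoc, (h.symm.pow_right _).eq, mul_assoc, ← pow_succ']

theorem List.count_map_finRange {α : Type*} [DecidableEq α] {n : ℕ} (i : Fin n → α) (a : α) :
    ((List.finRange n).map i).count a = #{ℓ | i ℓ = a} := by
  rw [← List.ofFn_eq_map, ← Multiset.coe_count, ← Fin.univ_val_map, Multiset.count_map]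
  simp [Finset.card, Finset.filter_val, eq_comm]

theorem card_filter_eq_one_of_mem_MPset {r s : ℕ} {i : Fin (r + s) → Fin 2}
    (hi : i ∈ MPset r s) : #{ℓ | i ℓ = 1} = s := by
  have hzero : #{ℓ | i ℓ = 0} = r := (mem_filter.mp hi).2
  have hsplit := card_filter_add_card_filter_not (s := univ) (fun ℓ => i ℓ = 0)
  simp only [← ne_eq, Fin.ne_zero_iff_eq_one, hzero, card_univ, Fintype.card_fin] at hsplit
  omega

theorem card_MPset (r s : ℕ) : #(MPset r s) = (r + s).choose r := by
  rw [show (r + s).choose r = #(powersetCard r (univ : Finset (Fin (r + s)))) by simp]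
  refine card_nbij' (fun i => ({ℓ | i ℓ = 0} : Finset _)) (fun t ℓ => if ℓ ∈ t then 0 else 1)
    ?_ ?_ ?_ ?_
  · intro i hi
    simpa [MPset] using hi
  · intro t ht
    simpa [MPset] using (mem_powersetCard.mp ht).2
  · intro i _
    funext ℓ
    simp only [mem_filter, mem_univ, true_and]
    split_ifs with h0
    · exact h0.symm
    · exact (Fin.ne_zero_iff_eq_one.mp h0).symm
  · intro t _
    ext ℓ
    simp

theorem prod_map_eq_pow_mul_pow_of_mem_MPset {M : Type*} [Monoid M] {F G : M} (h : Commute F G)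
    {r s : ℕ} {i : Fin (r + s) → Fin 2} (hi : i ∈ MPset r s) :
    ((List.finRange (r + s)).map fun ℓ => ![F, G] (i ℓ)).prod = F ^ r * G ^ s := by
  rw [show (fun ℓ => ![F, G] (i ℓ)) = ![F, G] ∘ i from rfl, ← List.map_map,
    List.prod_map_fin_two h, List.count_map_finRange, List.count_map_finRange,
    card_filter_eq_one_of_mem_MPset hi, (mem_filter.mp hi).2]
  rfl

theorem jointCumulant_eq_of_commute {d : ℕ} {A B S : Matrix (Fin d) (Fin d) ℝ}
    (h : Commute (A * S) (B * S)) (μ : Fin d → ℝ) (r s : ℕ) :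
    jointCumulant A B S μ r s =
      2 ^ (r + s - 1) * (r + s).factorial *
        (((r + s : ℕ) : ℝ)⁻¹ * ((A * S) ^ r * (B * S) ^ s).trace +
          ((A * S) ^ r * (B * S) ^ s * S⁻¹ * vecMulVec μ μ).trace) := by
  have hfact : ((r + s).choose r : ℝ) * r.factorial * s.factorial = (r + s).factorial := by
    exact_mod_cast Nat.choose_symm_add ▸ Nat.add_choose_mul_factorial_mul_factorial r s
  rw [jointCumulant, sum_congr rfl fun i hi => by rw [prod_map_eq_pow_mul_pow_of_mem_MPset h hi],
    sum_const, card_MPset, nsmul_eq_mul, mul_add, trace_add, Matrix.mul_smul, mul_one, trace_smul,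
    smul_eq_mul, ← mul_assoc _ S⁻¹, ← hfact]
  ring

theorem joint_cumulant_commuting_general (d : ℕ) (A B S : Matrix (Fin d) (Fin d) ℝ)
    (μ : Fin d → ℝ)
    (hcomm : (A * S) * (B * S) = (B * S) * (A * S))
    (r s : ℕ) (hrs : 1 ≤ r + s) :
    jointCumulant A B S μ r s =
      2 ^ (r + s - 1) * (r + s - 1).factorial *
        (((A * S) ^ r * (B * S) ^ s).trace +
          (r + s : ℕ) * ((A * S) ^ r * (B * S) ^ s * S⁻¹ * vecMulVec μ μ).trace) := by
  have hn : r + s ≠ 0 := by omega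
  have hinv : ((r + s : ℕ) : ℝ) * ((r + s : ℕ) : ℝ)⁻¹ = 1 := mul_inv_cancel₀ (by exact_mod_cast hn)
  rw [jointCumulant_eq_of_commute hcomm, ← Nat.mul_factorial_pred hn, Nat.cast_mul]
  linear_combination
    (2 ^ (r + s - 1) * ((r + s - 1).factorial : ℝ) * ((A * S) ^ r * (B * S) ^ s).trace) * hinv

/-- if `F₁ = AΣ` and `F₂ = BΣ` commute, then the joint cumulant
simplifies to
`κ_{r,s}(A,B) = 2^{r+s−1}(r+s−1)! { tr(F₁^r F₂^s) + (r+s) tr(F₁^r F₂^s Σ^{−1}μμᵀ) }`. -/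
theorem joint_cumulant_commuting (d : ℕ) (A B S : Matrix (Fin d) (Fin d) ℝ)
    (μ : Fin d → ℝ) (hS : S.PosDef) (hA : A.IsSymm) (hB : B.IsSymm)
    (hcomm : (A * S) * (B * S) = (B * S) * (A * S))
    (r s : ℕ) (hrs : 1 ≤ r + s) :
    jointCumulant A B S μ r s =
      2 ^ (r + s - 1) * (r + s - 1).factorial *
        (((A * S) ^ r * (B * S) ^ s).trace +
          (r + s : ℕ) * ((A * S) ^ r * (B * S) ^ s * S⁻¹ * vecMulVec μ μ).trace) :=
  joint_cumulant_commuting_general d A B S μ hcomm r s hrs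
end
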